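/- Let 0 < s < t and c > 0. Then the first moment of the Brownian meander transition density satisfies ∫₀^∞ x · (φ_{t-s}(c - x) − φ_{t-s}(c + x)) · (x t^{3/2} / (c s^{3/2})) · exp(-x²/(2s)) · exp(c²/(2t)) dx = ((t − s + s c²/t) / c) · erf( c √s / √(2 t (t − s)) ) + √(2 s (t − s) / (π t)) · exp( − s c² / (2 t (t − s)) ). -/

import Mathlib

open Real MeasureTheory Set

noncomputable def erf (z : ℝ) : ℝ := 2 / Real.sqrt π * ∫ u in (0:ℝ)..z, Real.exp (-u ^ 2)


/-- Centered Gaussian density with variance `σ`. -/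
noncomputable def phi (σ x : ℝ) : ℝ := (Real.sqrt (2 * π * σ))⁻¹ * Real.exp (-x ^ 2 / (2 * σ))

/-! Completing the square in the exponent turns the integrand into
`t / (c s) · x² (φ_v(x - m) - φ_v(x + m))` with `v = s (t - s) / t` and `m = s c / t`
(`φ_v(· - m)` is the time-`s` marginal of the Brownian bridge from `0` at time `0` to `c` at
time `t`). For every shift `a`, the function
`(a² + v) / 2 · erf ((x - a) / √(2v)) - v (x + a) φ_v(x - a)` is a primitive of `x² φ_v(x - a)`,
so the two truncated second moments are explicit, and their difference at `a = ±m` simplifies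
by the parity of `erf` and `φ_v`. -/

open Filter Topology

theorem hasDerivAt_erf (z : ℝ) : HasDerivAt erf (2 / √π * rexp (-z ^ 2)) z := by
  have hc : Continuous fun u : ℝ => rexp (-u ^ 2) := by fun_prop
  exact (intervalIntegral.integral_hasDerivAt_right (hc.intervalIntegrable 0 z)
    (hc.stronglyMeasurableAtFilter _ _) hc.continuousAt).const_mul _

theorem erf_neg (z : ℝ) : erf (-z) = -erf z := by
  have h := intervalIntegral.integral_comp_neg (a := -z) (b := 0) fun u => rexp (-u ^ 2)
  simp only [neg_neg, neg_zero, neg_sq] at h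
  rw [erf, erf, ← mul_neg, intervalIntegral.integral_symm, ← h]

theorem tendsto_erf_atTop : Tendsto erf atTop (𝓝 1) := by
  have hint : IntegrableOn (fun u : ℝ => rexp (-u ^ 2)) (Ioi 0) := by
    simpa using (integrable_exp_neg_mul_sq one_pos).integrableOn
  have h := (intervalIntegral_tendsto_integral_Ioi 0 hint tendsto_id).const_mul (2 / √π)
  have hval : ∫ u in Ioi (0 : ℝ), rexp (-u ^ 2) = √π / 2 := by
    simpa using integral_gaussian_Ioi 1
  have hone : 2 / √π * (√π / 2) = 1 := by
    field_simp [(sqrt_pos.mpr pi_pos).ne']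
  rwa [hval, hone] at h

theorem phi_neg (σ x : ℝ) : phi σ (-x) = phi σ x := by
  simp only [phi, neg_sq]

theorem phi_nonneg (σ x : ℝ) : 0 ≤ phi σ x := by
  unfold phi; positivity

theorem hasDerivAt_phi (σ x : ℝ) : HasDerivAt (phi σ) (-x / σ * phi σ x) x := by
  have h := (((hasDerivAt_pow 2 x).neg.div_const (2 * σ)).exp).const_mul (√(2 * π * σ))⁻¹
  refine h.congr_deriv ?_
  simp only [phi, Pi.neg_apply]
  by_cases hσ : σ = 0
  · simp [hσ]
  · field_simp
    ring

section gaussian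

variable {σ : ℝ}

theorem hasDerivAt_erf_div_sqrt (hσ : 0 < σ) (x : ℝ) :
    HasDerivAt (fun y => erf (y / √(2 * σ))) (2 * phi σ x) x := by
  have h := (hasDerivAt_erf (x / √(2 * σ))).comp x ((hasDerivAt_id x).div_const √(2 * σ))
  refine h.congr_deriv ?_
  have h2σ : (0 : ℝ) < 2 * σ := by positivity
  rw [phi, div_pow, sq_sqrt h2σ.le, show 2 * π * σ = π * (2 * σ) by ring,
    sqrt_mul pi_pos.le]
  field_simp

theorem tendsto_pow_mul_phi_atTop (hσ : 0 < σ) (n : ℕ) :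
    Tendsto (fun y => y ^ n * phi σ y) atTop (𝓝 0) := by
  have h := ((tendsto_rpow_abs_mul_exp_neg_mul_sq_cocompact (inv_pos.mpr (mul_pos two_pos hσ))
    n).mono_left atTop_le_cocompact).const_mul (√(2 * π * σ))⁻¹
  rw [mul_zero] at h
  refine h.congr' ?_
  filter_upwards [eventually_ge_atTop 0] with y hy
  rw [abs_of_nonneg hy, rpow_natCast, phi]
  ring_nf

theorem hasDerivAt_sq_mul_phi_primitive (hσ : 0 < σ) (a x : ℝ) :
    HasDerivAt (fun y => (a ^ 2 + σ) / 2 * erf ((y - a) / √(2 * σ)) - σ * ((y + a) * phi σ (y - a)))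
      (x ^ 2 * phi σ (x - a)) x := by
  have herf := (hasDerivAt_erf_div_sqrt hσ (x - a)).comp_sub_const x a
  have hphi := (hasDerivAt_phi σ (x - a)).comp_sub_const x a
  refine ((herf.const_mul _).sub ((((hasDerivAt_id x).add_const a).mul hphi).const_mul σ)).congr_deriv ?_
  simp only [id]
  field_simp
  ring

theorem tendsto_sq_mul_phi_primitive_atTop (hσ : 0 < σ) (a : ℝ) :
    Tendsto (fun y => (a ^ 2 + σ) / 2 * erf ((y - a) / √(2 * σ)) - σ * ((y + a) * phi σ (y - a)))
      atTop (𝓝 ((a ^ 2 + σ) / 2)) := by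
  have hshift : Tendsto (fun y : ℝ => y - a) atTop atTop := by
    simpa [sub_eq_add_neg] using tendsto_atTop_add_const_right atTop (-a) tendsto_id
  have herf : Tendsto (fun y => erf ((y - a) / √(2 * σ))) atTop (𝓝 1) :=
    tendsto_erf_atTop.comp (hshift.atTop_div_const (by positivity))
  have hphi := ((tendsto_pow_mul_phi_atTop hσ 1).comp hshift).add
    (((tendsto_pow_mul_phi_atTop hσ 0).comp hshift).const_mul (2 * a))
  have h := (herf.const_mul ((a ^ 2 + σ) / 2)).sub (hphi.const_mul σ)
  simp only [mul_one, mul_zero, add_zero, sub_zero] at h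
  refine h.congr fun y => ?_
  simp only [Function.comp_apply]
  ring

theorem integrableOn_Ioi_sq_mul_phi (hσ : 0 < σ) (a : ℝ) :
    IntegrableOn (fun x => x ^ 2 * phi σ (x - a)) (Ioi 0) :=
  integrableOn_Ioi_deriv_of_nonneg' (fun x _ => hasDerivAt_sq_mul_phi_primitive hσ a x)
    (fun x _ => mul_nonneg (sq_nonneg x) (phi_nonneg σ _)) (tendsto_sq_mul_phi_primitive_atTop hσ a)

theorem integral_Ioi_sq_mul_phi (hσ : 0 < σ) (a : ℝ) :
    ∫ x in Ioi 0, x ^ 2 * phi σ (x - a) =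
      (a ^ 2 + σ) / 2 * (1 + erf (a / √(2 * σ))) + σ * a * phi σ a := by
  rw [integral_Ioi_of_hasDerivAt_of_nonneg' (fun x _ => hasDerivAt_sq_mul_phi_primitive hσ a x)
    (fun x _ => mul_nonneg (sq_nonneg x) (phi_nonneg σ _)) (tendsto_sq_mul_phi_primitive_atTop hσ a)]
  rw [zero_sub, phi_neg, neg_div, erf_neg]
  ring

theorem integral_Ioi_sq_mul_phi_sub_sub_phi_add (hσ : 0 < σ) (a : ℝ) :
    ∫ x in Ioi 0, x ^ 2 * (phi σ (x - a) - phi σ (x + a)) =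
      (a ^ 2 + σ) * erf (a / √(2 * σ)) + 2 * σ * a * phi σ a := by
  have hadd : ∀ x, x + a = x - -a := fun x => (sub_neg_eq_add x a).symm
  simp_rw [mul_sub, hadd]
  rw [integral_sub (integrableOn_Ioi_sq_mul_phi hσ a) (integrableOn_Ioi_sq_mul_phi hσ (-a)),
    integral_Ioi_sq_mul_phi hσ, integral_Ioi_sq_mul_phi hσ, phi_neg, neg_div, erf_neg]
  ring

theorem two_mul_mul_phi (hσ : 0 < σ) (y : ℝ) :
    2 * σ * phi σ y = √(2 * σ / π) * rexp (-y ^ 2 / (2 * σ)) := by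
  rw [phi, ← mul_assoc, show 2 * π * σ = π * (2 * σ) by ring, sqrt_mul pi_pos.le,
    sqrt_div (by positivity)]
  have h := sq_sqrt (by positivity : (0 : ℝ) ≤ 2 * σ)
  have hπ := sqrt_pos.mpr pi_pos
  have h2σ := sqrt_pos.mpr (by positivity : (0 : ℝ) < 2 * σ)
  field_simp
  rw [h]

end gaussian

theorem rpow_three_halves {x : ℝ} (hx : 0 ≤ x) : x ^ ((3 : ℝ) / 2) = x * √x := by
  rw [show (3 : ℝ) / 2 = 1 + 1 / 2 by norm_num, rpow_add' hx (by norm_num), rpow_one,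
    sqrt_eq_rpow]

section meander

variable {s t : ℝ}

theorem phi_sub_mul_exp_mul_exp (hs : 0 < s) (hst : s < t) (c x : ℝ) :
    phi (t - s) (c - x) * rexp (-x ^ 2 / (2 * s)) * rexp (c ^ 2 / (2 * t)) =
      √(s / t) * phi (s * (t - s) / t) (x - s * c / t) := by
  have ht : 0 < t := hs.trans hst
  have hτ : 0 < t - s := sub_pos.mpr hst
  have hconst : (√(2 * π * (t - s)))⁻¹ = √(s / t) * (√(2 * π * (s * (t - s) / t)))⁻¹ := by
    rw [show 2 * π * (s * (t - s) / t) = s / t * (2 * π * (t - s)) by ring,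
      sqrt_mul (div_pos hs ht).le (2 * π * (t - s)), mul_inv, ← mul_assoc,
      mul_inv_cancel₀ (sqrt_pos.mpr (by positivity)).ne', one_mul]
  have hexp : -(c - x) ^ 2 / (2 * (t - s)) + -x ^ 2 / (2 * s) + c ^ 2 / (2 * t) =
      -(x - s * c / t) ^ 2 / (2 * (s * (t - s) / t)) := by
    field_simp
    ring
  rw [phi, phi, hconst, ← hexp, exp_add, exp_add]
  ring

theorem mul_meander_density_eq (hs : 0 < s) (hst : s < t) (c x : ℝ) :
    x * ((phi (t - s) (c - x) - phi (t - s) (c + x)) *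
        (x * t ^ ((3 : ℝ) / 2) / (c * s ^ ((3 : ℝ) / 2))) *
        rexp (-x ^ 2 / (2 * s)) * rexp (c ^ 2 / (2 * t))) =
      t / (c * s) * (x ^ 2 * (phi (s * (t - s) / t) (x - s * c / t) -
        phi (s * (t - s) / t) (x + s * c / t))) := by
  have ht : 0 < t := hs.trans hst
  have hminus := phi_sub_mul_exp_mul_exp hs hst c x
  have hplus := phi_sub_mul_exp_mul_exp hs hst (-c) x
  rw [← neg_add', phi_neg, neg_sq, mul_neg, neg_div t (s * c), sub_neg_eq_add] at hplus
  have hscale : t ^ ((3 : ℝ) / 2) * √(s / t) / s ^ ((3 : ℝ) / 2) = t / s := by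
    rw [rpow_three_halves ht.le, rpow_three_halves hs.le, sqrt_div' _ ht.le]
    field_simp
  calc _ = x ^ 2 / c * (t ^ ((3 : ℝ) / 2) / s ^ ((3 : ℝ) / 2)) *
        (phi (t - s) (c - x) * rexp (-x ^ 2 / (2 * s)) * rexp (c ^ 2 / (2 * t)) -
          phi (t - s) (c + x) * rexp (-x ^ 2 / (2 * s)) * rexp (c ^ 2 / (2 * t))) := by ring
    _ = x ^ 2 / c * (t ^ ((3 : ℝ) / 2) * √(s / t) / s ^ ((3 : ℝ) / 2)) *
        (phi (s * (t - s) / t) (x - s * c / t) - phi (s * (t - s) / t) (x + s * c / t)) := by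
      rw [hminus, hplus]
      ring
    _ = _ := by
      rw [hscale]
      ring

end meander

theorem stmt8 (s t c : ℝ) (hs : 0 < s) (hst : s < t) (hc : 0 < c) :
    ∫ x in Ioi (0 : ℝ),
        x * ((phi (t - s) (c - x) - phi (t - s) (c + x)) *
          (x * t ^ ((3 : ℝ) / 2) / (c * s ^ ((3 : ℝ) / 2))) *
          Real.exp (-x ^ 2 / (2 * s)) * Real.exp (c ^ 2 / (2 * t))) =
      (t - s + s * c ^ 2 / t) / c *
          erf (c * Real.sqrt s / Real.sqrt (2 * t * (t - s))) +
        Real.sqrt (2 * s * (t - s) / (π * t)) *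
          Real.exp (-(s * c ^ 2) / (2 * t * (t - s))) := by
  have ht : 0 < t := hs.trans hst
  have hτ : 0 < t - s := sub_pos.mpr hst
  simp_rw [mul_meander_density_eq hs hst c]
  set v := s * (t - s) / t with hv_def
  set m := s * c / t with hm_def
  have hv : 0 < v := by positivity
  have harg : m / √(2 * v) = c * √s / √(2 * t * (t - s)) := by
    rw [hm_def, hv_def, show 2 * (s * (t - s) / t) = s / t ^ 2 * (2 * t * (t - s)) by field_simp,
      sqrt_mul (by positivity), sqrt_div hs.le, sqrt_sq ht.le]
    have hsqrt_s := sqrt_pos.mpr hs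
    field_simp
    rw [sq_sqrt hs.le]
  have hcoef : t / (c * s) * (m ^ 2 + v) = (t - s + s * c ^ 2 / t) / c := by
    rw [hm_def, hv_def]
    field_simp
    ring
  have hgauss : t / (c * s) * (2 * v * m * phi v m) =
      √(2 * s * (t - s) / (π * t)) * rexp (-(s * c ^ 2) / (2 * t * (t - s))) := by
    rw [show t / (c * s) * (2 * v * m * phi v m) = 2 * v * phi v m by rw [hm_def]; field_simp,
      two_mul_mul_phi hv, hv_def, hm_def]
    congr 2
    · field_simp
    · field_simp
  rw [integral_const_mul, integral_Ioi_sq_mul_phi_sub_sub_phi_add hv, mul_add, ← mul_assoc, hcoef,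
    harg, hgauss]
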